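/- arXiv:1202.1712 — 7 statements merged into one kernel-verified Lean document; each statement's English description precedes it below -/
import Mathlib

section
/- Suppose S : Δ → ℝ³ is a strictly proper scoring rule satisfying the technical assumptions and the budget-constrained truthfulness property. Then there exist probability distributions p, q, q₀, p', q₀' ∈ Δ and budgets b, b' > 0 such that: (1) q = ½p + ½q₀, q is the maximizer of p·S(·) over {q'' : nb(q₀, q'') ≤ b}, S_X(q₀) − S_X(q) = b, S_Y(q₀) − S_Y(q) < b, and S_Z(q₀) − S_Z(q) < b; (2) q = ½p' + ½q₀', q is the maximizer of p'·S(·) over {q'' : nb(q₀', q'') ≤ b'}, S_X(q₀') − S_X(q) = b', S_Y(q₀') − S_Y(q) < b', and S_Z(q₀') − S_Z(q) < b'; and (3) p_Y / p_Z ≠ p'_Y / p'_Z. -/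
open scoped BigOperators

noncomputable section

/-- The probability simplex over the three outcomes `X, Y, Z` (identified with `0, 1, 2`). -/
def simplex3 : Set (Fin 3 → ℝ) := {q | (∀ i, 0 ≤ q i) ∧ ∑ i, q i = 1}

/-- The relative interior of the simplex: all coordinates strictly positive. -/
def relint3 : Set (Fin 3 → ℝ) := {q | (∀ i, 0 < q i) ∧ ∑ i, q i = 1}

/-- Dot product of two vectors in `ℝ³`. -/
def dot3 (p s : Fin 3 → ℝ) : ℝ := ∑ i, p i * s i

/-- A scoring rule `S : Δ → ℝ³` is strictly proper if for all `p ≠ q` in the simplex,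
`p·S(p) > p·S(q)`. -/
def StrictlyProper3 (S : (Fin 3 → ℝ) → Fin 3 → ℝ) : Prop :=
  ∀ p ∈ simplex3, ∀ q ∈ simplex3, p ≠ q → dot3 p (S q) < dot3 p (S p)

/-- Each component `S_i` is quasiconcave: `S_i(½p + ½q) ≥ min (S_i p) (S_i q)`, with equality
only if `S_i p = S_i q`. -/
def QuasiConcave3 (S : (Fin 3 → ℝ) → Fin 3 → ℝ) : Prop :=
  ∀ i : Fin 3, ∀ p ∈ simplex3, ∀ q ∈ simplex3,
    min (S p i) (S q i) ≤ S ((1/2 : ℝ) • p + (1/2 : ℝ) • q) i ∧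
    (S ((1/2 : ℝ) • p + (1/2 : ℝ) • q) i = min (S p i) (S q i) → S p i = S q i)

/-- The technical assumptions: continuity on the simplex, differentiability on its relative
interior, and componentwise quasiconcavity. -/
def Tech3 (S : (Fin 3 → ℝ) → Fin 3 → ℝ) : Prop :=
  ContinuousOn S simplex3 ∧ DifferentiableOn ℝ S relint3 ∧ QuasiConcave3 S

/-- The natural budget required to move from `q₀` to `q`: the worst-case loss
`max_i (S_i(q₀) − S_i(q))`. -/
def nb3 (S : (Fin 3 → ℝ) → Fin 3 → ℝ) (q₀ q : Fin 3 → ℝ) : ℝ :=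
  max (S q₀ 0 - S q 0) (max (S q₀ 1 - S q 1) (S q₀ 2 - S q 2))

/-- The budget-constrained truthfulness property: for every belief `p`, reference point `q₀`
and budget `b > 0`, the expected score `p·S(q)` over feasible reports (`q ∈ Δ` with
`nb(q₀,q) ≤ b`) is uniquely maximized at `q* = α p + (1−α) q₀`, where `α` is the largest
element of `{α ∈ [0,1] : nb(q₀, α p + (1−α) q₀) ≤ b}`. -/
def BCT3 (S : (Fin 3 → ℝ) → Fin 3 → ℝ) : Prop :=
  ∀ p ∈ simplex3, ∀ q₀ ∈ simplex3, ∀ b : ℝ, 0 < b →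
    ∃ α : ℝ,
      IsGreatest {a : ℝ | a ∈ Set.Icc (0:ℝ) 1 ∧
        nb3 S q₀ (a • p + (1 - a) • q₀) ≤ b} α ∧
      ∀ q ∈ simplex3, nb3 S q₀ q ≤ b → q ≠ α • p + (1 - α) • q₀ →
        dot3 p (S q) < dot3 p (S (α • p + (1 - α) • q₀))

/-!
In the affine coordinates `chart` on the simplex, strict properness says exactly that
`F z = (S_X - S_Z, S_Y - S_Z) (chart z)` is a strict subgradient of the expected score
`G z = chart z · S (chart z)`. The image of a continuous strict subgradient map is a neighbourhood
of each of its values, so by Sard's lemma `DF` is invertible somewhere. At such a point `q` there is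
a direction `d` along which `S_X` decreases strictly faster than `S_Y` and `S_Z`. For
`p = q + s d`, `q₀ = q - s d` and small `s > 0`, moving from `q₀` to `q` costs most in outcome `X`,
and any step beyond `q` towards `p` exceeds that budget, so budget-constrained truthfulness makes `q`
the optimum. Tilting `d` slightly from `Z` towards `Y` keeps all of this and changes `p_Y / p_Z`.
-/

open scoped InnerProductSpace
open Set Filter Topology MeasureTheory Metric

section StrictSubgradient

variable {E : Type*} [NormedAddCommGroup E] [InnerProductSpace ℝ E]

theorem eq_of_isLocalMin_sub_inner {G : E → ℝ} {F : E → E} {p x : E}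
    (hmin : IsLocalMin (fun y => G y - ⟪p, y⟫_ℝ) x)
    (hsub : ∀ᶠ y in 𝓝 x, G y + ⟪F y, x - y⟫_ℝ ≤ G x) (hF : ContinuousAt F x) :
    F x = p := by
  set v := p - F x
  have hline : Tendsto (fun t : ℝ => x + t • v) (𝓝[>] 0) (𝓝 x) :=
    (Continuous.tendsto' (by fun_prop) 0 x (by simp)).mono_left nhdsWithin_le_nhds
  have hle : ∀ᶠ t in 𝓝[>] (0 : ℝ), ⟪p, v⟫_ℝ ≤ ⟪F (x + t • v), v⟫_ℝ := by
    filter_upwards [hline.eventually hmin, hline.eventually hsub, self_mem_nhdsWithin]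
      with t hmin' hsub' (ht : 0 < t)
    simp only [inner_add_right, inner_smul_right, sub_add_cancel_left, inner_neg_right]
      at hmin' hsub'
    nlinarith
  have hlim : Tendsto (fun t : ℝ => ⟪F (x + t • v), v⟫_ℝ) (𝓝[>] 0) (𝓝 ⟪F x, v⟫_ℝ) :=
    (hF.tendsto.comp hline).inner tendsto_const_nhds
  have hv : ⟪v, v⟫_ℝ ≤ 0 := by
    have := ge_of_tendsto hlim hle
    rw [inner_sub_left]
    linarith
  exact (sub_eq_zero.1 (real_inner_self_nonpos.1 hv)).symm

theorem image_mem_nhds_of_strictSubgradient [ProperSpace E] {U : Set E} (hU : IsOpen U)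
    {G : E → ℝ} {F : E → E} (hG : ContinuousOn G U) (hF : ContinuousOn F U)
    (hsub : ∀ x ∈ U, ∀ y ∈ U, x ≠ y → G x + ⟪F x, y - x⟫_ℝ < G y) {c : E} (hc : c ∈ U) :
    F '' U ∈ 𝓝 (F c) := by
  obtain ⟨r, hr, hrU⟩ := nhds_basis_closedBall.mem_iff.1 (hU.mem_nhds hc)
  have hGr : ContinuousOn G (closedBall c r) := hG.mono hrU
  obtain ⟨a, ha, hgap⟩ := (isCompact_sphere c r).exists_forall_le' (a := G c)
    (f := fun y => G y - ⟪F c, y - c⟫_ℝ) ((hGr.mono sphere_subset_closedBall).sub (by fun_prop))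
    fun x hx => by
      have hxc : c ≠ x := fun h => hr.ne (by simpa [← h] using hx)
      linarith [hsub c hc x (hrU (sphere_subset_closedBall hx)) hxc]
  -- For `p` close to `F c`, `G - ⟪p, ·⟫` is minimised on the closed ball at an interior point.
  refine mem_nhds_iff.2 ⟨(a - G c) / r, by have := sub_pos.2 ha; positivity, fun p hp => ?_⟩
  obtain ⟨x, hx, hxmin⟩ := (isCompact_closedBall c r).exists_isMinOn
    ⟨c, mem_closedBall_self hr.le⟩ (f := fun y => G y - ⟪p, y⟫_ℝ) (hGr.sub (by fun_prop))
  have hxc : x ∈ ball c r := by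
    refine lt_of_le_of_ne (mem_closedBall.1 hx) fun hxr => ?_
    have hmin : G x - ⟪p, x⟫_ℝ ≤ G c - ⟪p, c⟫_ℝ := hxmin (mem_closedBall_self hr.le)
    have hcs : ⟪p - F c, x - c⟫_ℝ ≤ ‖p - F c‖ * ‖x - c‖ := real_inner_le_norm _ _
    rw [← dist_eq_norm, ← dist_eq_norm, hxr] at hcs
    have hpr : dist p (F c) * r < a - G c := (lt_div_iff₀ hr).1 (mem_ball.1 hp)
    have := hgap x (mem_sphere.2 hxr)
    simp only [inner_sub_left, inner_sub_right] at hmin hcs this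
    linarith
  have hxU : x ∈ U := hrU (ball_subset_closedBall hxc)
  refine ⟨x, hxU, eq_of_isLocalMin_sub_inner (hxmin.isLocalMin (closedBall_mem_nhds_of_mem hxc))
    ?_ (hF.continuousAt (hU.mem_nhds hxU))⟩
  filter_upwards [hU.mem_nhds hxU] with y hy
  rcases eq_or_ne y x with rfl | hyx
  · simp
  · exact (hsub y hy x hxU hyx).le

end StrictSubgradient

theorem exists_surjective_of_image_mem_nhds {E : Type*} [NormedAddCommGroup E] [NormedSpace ℝ E]
    [FiniteDimensional ℝ E] [MeasurableSpace E] [BorelSpace E] {U : Set E} {F : E → E}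
    {F' : E → E →L[ℝ] E} (hF' : ∀ x ∈ U, HasFDerivWithinAt F (F' x) U x) {y : E}
    (hy : F '' U ∈ 𝓝 y) : ∃ x ∈ U, Function.Surjective (F' x) := by
  by_contra! h
  have hdet : ∀ x ∈ U, (F' x).det = 0 := fun x hx => by
    by_contra hne
    have hunit : IsUnit (F' x : E →ₗ[ℝ] E) :=
      (LinearMap.isUnit_iff_isUnit_det _).2 (isUnit_iff_ne_zero.2 hne)
    exact h x hx ((Module.End.isUnit_iff _).1 hunit).2
  have hnull := addHaar_image_eq_zero_of_det_fderivWithin_eq_zero Measure.addHaar hF' hdet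
  exact (Measure.measure_pos_of_mem_nhds _ hy).ne' hnull

lemma HasDerivAt.eventually_lt_nhdsGT {f : ℝ → ℝ} {f' : ℝ} (hf : HasDerivAt f f' 0)
    (hf' : 0 < f') : ∀ᶠ t in 𝓝[>] 0, f 0 < f t := by
  filter_upwards [hf.tendsto_slope_zero_right.eventually (lt_mem_nhds hf'), self_mem_nhdsWithin]
    with t ht (ht0 : 0 < t)
  rw [zero_add, smul_eq_mul] at ht
  linarith [(pos_iff_pos_of_mul_pos ht).1 (inv_pos.2 ht0)]

lemma eventually_nhdsGT_forall_Ioc {P : ℝ → Prop} (h : ∀ᶠ t in 𝓝[>] (0 : ℝ), P t) :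
    ∀ᶠ s in 𝓝[>] (0 : ℝ), ∀ t ∈ Ioc 0 s, P t := by
  obtain ⟨ε, hε, hP⟩ := mem_nhdsGT_iff_exists_Ioo_subset.1 h
  filter_upwards [Ioo_mem_nhdsGT hε] with s hs t ht using hP ⟨ht.1, ht.2.trans_lt hs.2⟩

abbrev Plane := EuclideanSpace ℝ (Fin 2)

def chart (z : Plane) : Fin 3 → ℝ := ![z 0, z 1, 1 - z 0 - z 1]

def openTriangle : Set Plane := {z | ∀ i, 0 < chart z i}

def scoreDiff : (Fin 3 → ℝ) →L[ℝ] Plane :=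
  LinearMap.toContinuousLinearMap
    { toFun := fun s => !₂[s 0 - s 2, s 1 - s 2]
      map_add' := fun a b => by ext i; fin_cases i <;> simp <;> ring
      map_smul' := fun c a => by ext i; fin_cases i <;> simp <;> ring }

def xCone : Set (Fin 3 → ℝ) := {w | w 0 < w 1 ∧ w 0 < w 2}

@[simp] lemma scoreDiff_apply_zero (s : Fin 3 → ℝ) : scoreDiff s 0 = s 0 - s 2 := by
  simp [scoreDiff]

@[simp] lemma scoreDiff_apply_one (s : Fin 3 → ℝ) : scoreDiff s 1 = s 1 - s 2 := by
  simp [scoreDiff]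

lemma differentiable_chart : Differentiable ℝ chart := by
  rw [differentiable_pi]; intro i; fin_cases i <;> simp [chart] <;> fun_prop

lemma chart_injective : Function.Injective chart := fun x y h => by
  ext i; fin_cases i
  · simpa [chart] using congrFun h 0
  · simpa [chart] using congrFun h 1

lemma sum_chart (z : Plane) : ∑ i, chart z i = 1 := by
  simp [chart, Fin.sum_univ_three]

lemma chart_mem_relint3 {z : Plane} (hz : z ∈ openTriangle) : chart z ∈ relint3 :=
  ⟨hz, sum_chart z⟩

lemma chart_mem_simplex3 {z : Plane} (hz : z ∈ openTriangle) : chart z ∈ simplex3 :=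
  ⟨fun i => (hz i).le, sum_chart z⟩

lemma isOpen_openTriangle : IsOpen openTriangle := by
  simp only [openTriangle, ofPred_forall]
  exact isOpen_iInter_of_finite fun i =>
    isOpen_lt continuous_const ((continuous_apply i).comp differentiable_chart.continuous)

lemma eventually_add_smul_mem_openTriangle {z : Plane} (hz : z ∈ openTriangle) (v : Plane) :
    ∀ᶠ s in 𝓝 (0 : ℝ), z + s • v ∈ openTriangle :=
  (Continuous.tendsto' (by fun_prop) 0 z (by simp)).eventually (isOpen_openTriangle.mem_nhds hz)

lemma smul_chart_add_smul_chart (a : ℝ) (x y : Plane) :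
    a • chart x + (1 - a) • chart y = chart (a • x + (1 - a) • y) := by
  ext i; fin_cases i <;> simp [chart]; ring

lemma dot3_chart (x y : Plane) (s : Fin 3 → ℝ) :
    dot3 (chart y) s = dot3 (chart x) s + ⟪scoreDiff s, y - x⟫_ℝ := by
  simp [dot3, chart, Fin.sum_univ_three, PiLp.inner_apply, Fin.sum_univ_two]; ring

lemma isOpen_xCone : IsOpen xCone :=
  (isOpen_lt (continuous_apply 0) (continuous_apply 1)).inter
    (isOpen_lt (continuous_apply 0) (continuous_apply 2))

lemma neg_of_mem_xCone {q w : Fin 3 → ℝ} (hq : q ∈ relint3) (hw : w ∈ xCone)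
    (hqw : dot3 q w = 0) : w 0 < 0 := by
  obtain ⟨hpos, hsum⟩ := hq
  simp only [dot3, Fin.sum_univ_three] at hqw hsum
  nlinarith [mul_lt_mul_of_pos_left hw.1 (hpos 1), mul_lt_mul_of_pos_left hw.2 (hpos 2)]

lemma div_chart_lt_add_smul_single {y : Plane} (hy : 0 ≤ chart y 1) {t : ℝ} (ht : 0 < t)
    (hyt : y + t • EuclideanSpace.single 1 1 ∈ openTriangle) :
    chart y 1 / chart y 2 <
      chart (y + t • EuclideanSpace.single 1 1) 1 / chart (y + t • EuclideanSpace.single 1 1) 2 := by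
  have hz := hyt 2
  simp [chart] at hy hz ⊢
  rw [div_lt_div_iff₀ (by linarith) (by linarith)]
  nlinarith

def IsXBindingOptimum (S : (Fin 3 → ℝ) → Fin 3 → ℝ) (p q q₀ : Fin 3 → ℝ) (b : ℝ) : Prop :=
  p ∈ simplex3 ∧ q₀ ∈ simplex3 ∧ 0 < b ∧ q = (1/2 : ℝ) • p + (1/2 : ℝ) • q₀ ∧
    (∀ q'' ∈ simplex3, nb3 S q₀ q'' ≤ b → dot3 p (S q'') ≤ dot3 p (S q)) ∧
    S q₀ 0 - S q 0 = b ∧ S q₀ 1 - S q 1 < b ∧ S q₀ 2 - S q 2 < b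

section ScoringRule

variable {S : (Fin 3 → ℝ) → Fin 3 → ℝ}

lemma StrictlyProper3.dot3_le (hSP : StrictlyProper3 S) {p q : Fin 3 → ℝ} (hp : p ∈ simplex3)
    (hq : q ∈ simplex3) : dot3 p (S q) ≤ dot3 p (S p) := by
  rcases eq_or_ne p q with rfl | hpq
  · exact le_rfl
  · exact (hSP p hp q hq hpq).le

lemma StrictlyProper3.strictSubgradient (hSP : StrictlyProper3 S) {x y : Plane}
    (hx : x ∈ openTriangle) (hy : y ∈ openTriangle) (hxy : x ≠ y) :
    dot3 (chart x) (S (chart x)) + ⟪scoreDiff (S (chart x)), y - x⟫_ℝ <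
      dot3 (chart y) (S (chart y)) := by
  rw [← dot3_chart]
  exact hSP _ (chart_mem_simplex3 hy) _ (chart_mem_simplex3 hx) (chart_injective.ne hxy.symm)

lemma StrictlyProper3.dot3_chart_fderiv_eq_zero (hSP : StrictlyProper3 S) {z : Plane}
    (hz : z ∈ openTriangle) {D : Plane →L[ℝ] Fin 3 → ℝ} (hD : HasFDerivAt (S ∘ chart) D z)
    (v : Plane) : dot3 (chart z) (D v) = 0 := by
  have hline : HasDerivAt (fun t : ℝ => S (chart (z + t • v))) (D v) 0 := hD.hasLineDerivAt v
  have hφ : HasDerivAt (fun t : ℝ => dot3 (chart z) (S (chart (z + t • v))))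
      (dot3 (chart z) (D v)) 0 :=
    HasDerivAt.fun_sum fun i _ => (hasDerivAt_pi.1 hline i).const_mul _
  refine IsLocalMax.hasDerivAt_eq_zero ?_ hφ
  filter_upwards [eventually_add_smul_mem_openTriangle hz v] with t ht
  simpa using hSP.dot3_le (chart_mem_simplex3 hz) (chart_mem_simplex3 ht)

lemma exists_fderiv_mem_xCone (hSP : StrictlyProper3 S)
    (hS : DifferentiableOn ℝ (S ∘ chart) openTriangle) :
    ∃ z ∈ openTriangle, ∃ d, fderiv ℝ (S ∘ chart) z d ∈ xCone := by
  have hG : ContinuousOn (fun z => dot3 (chart z) (S (chart z))) openTriangle :=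
    continuousOn_finsetSum _ fun i _ =>
      ((continuous_apply i).comp differentiable_chart.continuous).continuousOn.mul
        ((continuous_apply i).comp_continuousOn hS.continuousOn)
  have hc : !₂[1/3, 1/3] ∈ openTriangle := by
    intro i; fin_cases i <;> norm_num [chart]
  have himage := image_mem_nhds_of_strictSubgradient isOpen_openTriangle hG
    (scoreDiff.continuous.comp_continuousOn hS.continuousOn)
    (fun x hx y hy hxy => hSP.strictSubgradient hx hy hxy) hc
  obtain ⟨z, hz, hsurj⟩ := exists_surjective_of_image_mem_nhds (fun z hz =>
    (scoreDiff.hasFDerivAt.comp z (hS.differentiableAt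
      (isOpen_openTriangle.mem_nhds hz)).hasFDerivAt).hasFDerivWithinAt) himage
  obtain ⟨d, hd⟩ := hsurj !₂[-1, 0]
  have h0 := congrArg (· 0) hd
  have h1 := congrArg (· 1) hd
  simp at h0 h1
  exact ⟨z, hz, d, by linarith, by linarith⟩

lemma BCT3.dot3_le_midpoint (hBCT : BCT3 S) {p q₀ : Fin 3 → ℝ} {b : ℝ} (hp : p ∈ simplex3)
    (hq₀ : q₀ ∈ simplex3) (hb : 0 < b) (hmid : nb3 S q₀ ((1/2 : ℝ) • p + (1/2 : ℝ) • q₀) ≤ b)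
    (hbeyond : ∀ a ∈ Ioc (1/2 : ℝ) 1, b < nb3 S q₀ (a • p + (1 - a) • q₀)) :
    ∀ q ∈ simplex3, nb3 S q₀ q ≤ b →
      dot3 p (S q) ≤ dot3 p (S ((1/2 : ℝ) • p + (1/2 : ℝ) • q₀)) := by
  obtain ⟨α, ⟨⟨⟨-, hα1⟩, hαb⟩, hαmax⟩, hbest⟩ := hBCT p hp q₀ hq₀ b hb
  have hhalf : (1 - 1/2 : ℝ) = 1/2 := by norm_num
  have hα : α = 1/2 :=
    le_antisymm (not_lt.1 fun h => (hbeyond α ⟨h, hα1⟩).not_ge hαb)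
      (hαmax ⟨by norm_num, by rwa [hhalf]⟩)
  rw [hα, hhalf] at hbest
  intro q hq hqb
  rcases eq_or_ne q ((1/2 : ℝ) • p + (1/2 : ℝ) • q₀) with rfl | hne
  · exact le_rfl
  · exact (hbest q hq hqb hne).le

section Line

variable {z d : Plane} {D : Plane →L[ℝ] Fin 3 → ℝ}

lemma eventually_lossX_dominant (hSP : StrictlyProper3 S) (hz : z ∈ openTriangle)
    (hD : HasFDerivAt (S ∘ chart) D z) (hd : D d ∈ xCone) :
    ∀ᶠ s in 𝓝[>] (0 : ℝ),
      S (chart z) 0 < S (chart (z - s • d)) 0 ∧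
      S (chart (z - s • d)) 1 - S (chart z) 1 < S (chart (z - s • d)) 0 - S (chart z) 0 ∧
      S (chart (z - s • d)) 2 - S (chart z) 2 < S (chart (z - s • d)) 0 - S (chart z) 0 ∧
      ∀ t ∈ Ioc 0 s, S (chart (z + t • d)) 0 < S (chart z) 0 := by
  have hw0 : D d 0 < 0 :=
    neg_of_mem_xCone (chart_mem_relint3 hz) hd (hSP.dot3_chart_fderiv_eq_zero hz hD d)
  have hfwd := hasDerivAt_pi.1 (hD.hasLineDerivAt d)
  have hbwd : ∀ i, HasDerivAt (fun t : ℝ => S (chart (z - t • d)) i) (-D d i) 0 := by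
    simpa [sub_eq_add_neg] using hasDerivAt_pi.1 (hD.hasLineDerivAt (-d))
  filter_upwards [(hbwd 0).eventually_lt_nhdsGT (by linarith),
    ((hbwd 0).sub (hbwd 1)).eventually_lt_nhdsGT (by linarith [hd.1]),
    ((hbwd 0).sub (hbwd 2)).eventually_lt_nhdsGT (by linarith [hd.2]),
    eventually_nhdsGT_forall_Ioc ((hfwd 0).neg.eventually_lt_nhdsGT (by linarith))]
    with s h0 h1 h2 hfwd0
  simp only [Pi.sub_apply, Pi.neg_apply, Function.comp_apply, zero_smul, sub_zero, add_zero]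
    at h0 h1 h2 hfwd0
  exact ⟨h0, by linarith, by linarith, fun t ht => by linarith [hfwd0 t ht]⟩

lemma eventually_isXBindingOptimum (hSP : StrictlyProper3 S) (hBCT : BCT3 S)
    (hz : z ∈ openTriangle) (hD : HasFDerivAt (S ∘ chart) D z) (hd : D d ∈ xCone) :
    ∀ᶠ s in 𝓝[>] (0 : ℝ), IsXBindingOptimum S (chart (z + s • d)) (chart z) (chart (z - s • d))
      (S (chart (z - s • d)) 0 - S (chart z) 0) := by
  filter_upwards [eventually_lossX_dominant hSP hz hD hd,
    (eventually_add_smul_mem_openTriangle hz d).filter_mono nhdsWithin_le_nhds,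
    (eventually_add_smul_mem_openTriangle hz (-d)).filter_mono nhdsWithin_le_nhds,
    self_mem_nhdsWithin] with s ⟨hb, hY, hZ, hX⟩ hp hq₀ (hs : 0 < s)
  rw [smul_neg, ← sub_eq_add_neg] at hq₀
  have hseg (a : ℝ) : a • chart (z + s • d) + (1 - a) • chart (z - s • d) =
      chart (z + ((2 * a - 1) * s) • d) := by
    rw [smul_chart_add_smul_chart]; congr 1; module
  have hmid : (1/2 : ℝ) • chart (z + s • d) + (1/2 : ℝ) • chart (z - s • d) = chart z := by
    convert hseg (1/2) using 2 <;> norm_num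
  have hnb : nb3 S (chart (z - s • d)) (chart z) = S (chart (z - s • d)) 0 - S (chart z) 0 :=
    max_eq_left (max_le hY.le hZ.le)
  refine ⟨chart_mem_simplex3 hp, chart_mem_simplex3 hq₀, sub_pos.2 hb, hmid.symm, ?_, rfl, hY, hZ⟩
  have hbeyond : ∀ a ∈ Ioc (1/2 : ℝ) 1, S (chart (z - s • d)) 0 - S (chart z) 0 <
      nb3 S (chart (z - s • d)) (a • chart (z + s • d) + (1 - a) • chart (z - s • d)) := by
    rintro a ⟨ha, ha1⟩
    rw [hseg]
    have := hX ((2 * a - 1) * s) ⟨by nlinarith, by nlinarith⟩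
    exact (by linarith : _ < _).trans_le (le_max_left _ _)
  have hopt := hBCT.dot3_le_midpoint (chart_mem_simplex3 hp) (chart_mem_simplex3 hq₀)
    (sub_pos.2 hb) (by rw [hmid, hnb]) hbeyond
  rwa [hmid] at hopt

end Line

end ScoringRule

/-- Lemma `construction`: if `S` is a strictly proper scoring rule satisfying the
technical assumptions and the budget-constrained truthfulness property, then there exist
distributions `p, q, q₀, p', q₀' ∈ Δ` and budgets `b, b' > 0` such that:
(1) `q = ½p + ½q₀`, `q` maximizes `p·S(·)` over `{q'' ∈ Δ : nb(q₀, q'') ≤ b}`,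
    `S_X(q₀) − S_X(q) = b`, `S_Y(q₀) − S_Y(q) < b`, and `S_Z(q₀) − S_Z(q) < b`;
(2) `q = ½p' + ½q₀'`, `q` maximizes `p'·S(·)` over `{q'' ∈ Δ : nb(q₀', q'') ≤ b'}`,
    `S_X(q₀') − S_X(q) = b'`, `S_Y(q₀') − S_Y(q) < b'`, and `S_Z(q₀') − S_Z(q) < b'`;
(3) `p_Y / p_Z ≠ p'_Y / p'_Z`. -/
theorem stmt2 (S : (Fin 3 → ℝ) → Fin 3 → ℝ)
    (hSP : StrictlyProper3 S) (hTech : Tech3 S) (hBCT : BCT3 S) :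
    ∃ p q q₀ p' q₀' : Fin 3 → ℝ, ∃ b b' : ℝ,
      p ∈ simplex3 ∧ q ∈ simplex3 ∧ q₀ ∈ simplex3 ∧ p' ∈ simplex3 ∧ q₀' ∈ simplex3 ∧
      0 < b ∧ 0 < b' ∧
      -- (1)
      q = (1/2 : ℝ) • p + (1/2 : ℝ) • q₀ ∧
      (∀ q'' ∈ simplex3, nb3 S q₀ q'' ≤ b → dot3 p (S q'') ≤ dot3 p (S q)) ∧
      S q₀ 0 - S q 0 = b ∧ S q₀ 1 - S q 1 < b ∧ S q₀ 2 - S q 2 < b ∧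
      -- (2)
      q = (1/2 : ℝ) • p' + (1/2 : ℝ) • q₀' ∧
      (∀ q'' ∈ simplex3, nb3 S q₀' q'' ≤ b' → dot3 p' (S q'') ≤ dot3 p' (S q)) ∧
      S q₀' 0 - S q 0 = b' ∧ S q₀' 1 - S q 1 < b' ∧ S q₀' 2 - S q 2 < b' ∧
      -- (3)
      p 1 / p 2 ≠ p' 1 / p' 2 := by
  have hS : DifferentiableOn ℝ (S ∘ chart) openTriangle :=
    hTech.2.1.comp differentiable_chart.differentiableOn fun _ => chart_mem_relint3
  obtain ⟨z, hz, d, hd⟩ := exists_fderiv_mem_xCone hSP hS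
  have hD := (hS.differentiableAt (isOpen_openTriangle.mem_nhds hz)).hasFDerivAt
  set e : Plane := EuclideanSpace.single 1 1
  have hcone : ∀ᶠ ε in 𝓝 (0 : ℝ), fderiv ℝ (S ∘ chart) z (d + ε • e) ∈ xCone :=
    (Continuous.tendsto' (by fun_prop) 0 _ (by simp)).eventually (isOpen_xCone.mem_nhds hd)
  obtain ⟨ε, hd', hε : 0 < ε⟩ :=
    ((hcone.filter_mono (nhdsWithin_le_nhds (s := Ioi 0))).and self_mem_nhdsWithin).exists
  obtain ⟨s, ⟨⟨h, h'⟩, hshifted⟩, hs : 0 < s⟩ :=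
    (((eventually_isXBindingOptimum hSP hBCT hz hD hd).and
      (eventually_isXBindingOptimum hSP hBCT hz hD hd')).and
      ((eventually_add_smul_mem_openTriangle hz (d + ε • e)).filter_mono nhdsWithin_le_nhds)).and
      self_mem_nhdsWithin |>.exists
  obtain ⟨hp, hq₀, hb, hmid, hmax, hX, hY, hZ⟩ := h
  obtain ⟨hp', hq₀', hb', hmid', hmax', hX', hY', hZ'⟩ := h'
  have hshift : z + s • (d + ε • e) = z + s • d + (s * ε) • e := by module
  refine ⟨_, _, _, _, _, _, _, hp, chart_mem_simplex3 hz, hq₀, hp', hq₀', hb, hb', hmid, hmax, hX,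
    hY, hZ, hmid', hmax', hX', hY', hZ', ?_⟩
  rw [hshift] at hshifted ⊢
  exact (div_chart_lt_add_smul_single (hp.1 1) (mul_pos hs hε) hshifted).ne
end
end

section
/- There is no scoring rule S : Δ → ℝ³ over three outcomes that is strictly proper, satisfies the technical assumptions (continuity on Δ, differentiability on the relative interior of Δ, and componentwise quasiconcavity), and satisfies the budget-constrained truthfulness property. -/
open scoped BigOperators

noncomputable section

/-!
Let `m j` be the minimum of `S · j` over the simplex; some gap `S q j - m j` is positive since a
strictly proper `S` is not constant. The constraint `S q j ≥ S q₀ j - b` of the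
budget problem at `(q₀, b)` is vacuous once `S q₀ j - b < m j`, so for a budget just below the
largest gap `S q₀ k - m k` only the coordinates of largest gap constrain. At a point `q₀` where
these top coordinates stay tied nearby (take one with the fewest tied coordinates), moving the
reference point to any nearby `q₀'` and shifting the budget by `S q₀' k - S q₀ k` leaves the
feasible region unchanged. For the belief `p` minimizing `S · k` both problems have the same
unique optimum `≠ p`, which lies on the segments from `q₀` and from `q₀'` to `p`; hence every
nearby `q₀'` is on the line through `p` and `q₀`, which is absurd in a two-dimensional simplex.
-/

open Filter Topology

theorem mem_affineSpan_pair_of_smul_add_smul_eq {k V : Type*} [Field k] [AddCommGroup V]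
    [Module k V] {p q q' : V} {a a' : k} (h : a • p + (1 - a) • q = a' • p + (1 - a') • q')
    (hne : a' • p + (1 - a') • q' ≠ p) : q' ∈ line[k, p, q] := by
  have ha' : 1 - a' ≠ 0 := by
    rintro h'
    obtain rfl : a' = 1 := by linear_combination -h'
    simp at hne
  have hq' : q' = AffineMap.lineMap p q ((1 - a) / (1 - a')) := by
    apply smul_right_injective V ha'
    have hc : (1 - a') * ((1 - a) / (1 - a')) = 1 - a := mul_div_cancel₀ _ ha'
    simp only [AffineMap.lineMap_apply_module, smul_add, smul_smul, mul_sub, mul_one, hc]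
    linear_combination (norm := module) -h
  rw [hq']
  exact AffineMap.lineMap_mem_affineSpan_pair _ _ _

theorem exists_argmax_eventually_tied {X ι : Type*} [TopologicalSpace X] [Fintype ι]
    {s : Set X} {f : X → ι → ℝ} (hf : ContinuousOn f s) (hpos : ∃ x ∈ s, ∃ i, 0 < f x i) :
    ∃ x₀ ∈ s, ∃ k, 0 < f x₀ k ∧
      ∀ j, f x₀ j < f x₀ k ∨ ∀ᶠ x in 𝓝[s] x₀, f x j = f x k := by
  classical
  let argmax (x : X) : Finset ι := {j | ∀ i, f x i ≤ f x j}
  have hex : ∃ n, ∃ x ∈ s, (∃ i, 0 < f x i) ∧ (argmax x).card = n := by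
    obtain ⟨x, hx, hxpos⟩ := hpos
    exact ⟨_, x, hx, hxpos, rfl⟩
  obtain ⟨x₀, hx₀, ⟨i, hi⟩, hcard⟩ := Nat.find_spec hex
  have : Nonempty ι := ⟨i⟩
  obtain ⟨k, hk⟩ := Finite.exists_max (f x₀)
  refine ⟨x₀, hx₀, k, hi.trans_le (hk i), fun j => (hk j).lt_or_eq.imp_right fun hjk => ?_⟩
  have hf' : ∀ j, Tendsto (fun x => f x j) (𝓝[s] x₀) (𝓝 (f x₀ j)) :=
    fun j => ((continuous_apply j).tendsto _).comp (hf x₀ hx₀)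
  have hsub : ∀ᶠ x in 𝓝[s] x₀, argmax x ⊆ argmax x₀ := by
    have : ∀ᶠ x in 𝓝[s] x₀, ∀ j, f x₀ j < f x₀ k → f x j < f x k :=
      eventually_all.2 fun j => by
        by_cases hj : f x₀ j < f x₀ k
        · filter_upwards [(hf' j).eventually_lt (hf' k) hj] with x hx using fun _ => hx
        · exact .of_forall fun _ h => absurd h hj
    filter_upwards [this] with x hx j hj
    simp only [argmax, Finset.mem_filter_univ] at hj ⊢
    exact fun i => (hk i).trans (not_lt.1 fun h => (hj k).not_gt (hx j h))
  filter_upwards [self_mem_nhdsWithin, hsub, (hf' k).eventually_const_lt (hi.trans_le (hk i))]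
    with x hx hsub hxk
  have hargmax : argmax x = argmax x₀ :=
    Finset.eq_of_subset_of_card_le hsub (hcard ▸ Nat.find_min' hex ⟨x, hx, ⟨k, hxk⟩, rfl⟩)
  have hj : j ∈ argmax x := hargmax ▸ (Finset.mem_filter_univ _).2 fun i => hjk ▸ hk i
  have hk' : k ∈ argmax x := hargmax ▸ (Finset.mem_filter_univ _).2 hk
  exact le_antisymm ((Finset.mem_filter_univ _).1 hk' j) ((Finset.mem_filter_univ _).1 hj k)

theorem simplex3_eq_stdSimplex : simplex3 = stdSimplex ℝ (Fin 3) := rfl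

theorem exists_single_notMem_affineSpan_pair (p q : Fin 3 → ℝ) :
    ∃ i, Pi.single i 1 ∉ line[ℝ, p, q] := by
  by_contra! h
  have hind : AffineIndependent ℝ fun i : Fin 3 => (Pi.single i 1 : Fin 3 → ℝ) :=
    (Pi.linearIndependent_single_one (Fin 3) ℝ).affineIndependent
  refine affineIndependent_iff_not_collinear.1 hind
    ((collinear_insert_insert_insert_of_mem_affineSpan_pair (h 0) (h 1) (h 2)).subset ?_)
  rintro _ ⟨i, rfl⟩
  fin_cases i <;> simp

theorem not_eventually_mem_affineSpan_pair {q₀ : Fin 3 → ℝ} (hq₀ : q₀ ∈ simplex3)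
    (p : Fin 3 → ℝ) : ¬ ∀ᶠ q in 𝓝[simplex3] q₀, q ∈ line[ℝ, p, q₀] := by
  intro h
  obtain ⟨i, hi⟩ := exists_single_notMem_affineSpan_pair p q₀
  rw [simplex3_eq_stdSimplex] at hq₀ h
  have hc : Tendsto (AffineMap.lineMap q₀ (Pi.single i 1)) (𝓝[>] (0 : ℝ))
      (𝓝[stdSimplex ℝ (Fin 3)] q₀) := by
    refine tendsto_nhdsWithin_iff.2 ⟨?_, ?_⟩
    · exact (AffineMap.lineMap_continuous.tendsto' 0 q₀ (by simp)).mono_left nhdsWithin_le_nhds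
    · filter_upwards [Ioo_mem_nhdsGT zero_lt_one] with ε hε
      exact (convex_stdSimplex ℝ (Fin 3)).lineMap_mem hq₀ (single_mem_stdSimplex ℝ i)
        ⟨hε.1.le, hε.2.le⟩
  obtain ⟨ε, hεline, hε⟩ := ((hc.eventually h).and self_mem_nhdsWithin).exists
  apply hi
  have := AffineMap.lineMap_mem ε⁻¹ (right_mem_affineSpan_pair ℝ p q₀) hεline
  rwa [AffineMap.lineMap_lineMap_right, inv_mul_cancel₀ hε.ne', AffineMap.lineMap_apply_one]
    at this

section ScoringRule

variable {S : (Fin 3 → ℝ) → Fin 3 → ℝ}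

theorem nb3_le_iff {q₀ q : Fin 3 → ℝ} {b : ℝ} : nb3 S q₀ q ≤ b ↔ ∀ j, S q₀ j - b ≤ S q j := by
  simp [nb3, Fin.forall_fin_succ, add_comm]

theorem nb3_le_iff_nb3_le {m : Fin 3 → ℝ} (hm : ∀ j, ∀ q ∈ simplex3, m j ≤ S q j)
    {q₀ q₀' q : Fin 3 → ℝ} {b b' : ℝ}
    (h : ∀ j, S q₀ j - b = S q₀' j - b' ∨ (S q₀ j - b < m j ∧ S q₀' j - b' < m j))
    (hq : q ∈ simplex3) : nb3 S q₀ q ≤ b ↔ nb3 S q₀' q ≤ b' := by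
  simp only [nb3_le_iff]
  refine forall_congr' fun j => ?_
  rcases h j with h | ⟨h, h'⟩
  · rw [h]
  · have := hm j q hq
    exact iff_of_true (by linarith) (by linarith)

theorem StrictlyProper3.exists_ne (hS : StrictlyProper3 S) (m : Fin 3 → ℝ) :
    ∃ q ∈ simplex3, S q ≠ m := by
  by_contra! h
  have h0 : Pi.single 0 1 ∈ simplex3 := single_mem_stdSimplex ℝ 0
  have h1 : Pi.single 1 1 ∈ simplex3 := single_mem_stdSimplex ℝ 1
  have := hS _ h0 _ h1 (by simp [funext_iff, Fin.forall_fin_succ])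
  rw [h _ h0, h _ h1] at this
  exact this.false

theorem BCT3.mem_affineSpan_pair_of_feasible_iff (hBCT : BCT3 S) {p q₀ q₀' : Fin 3 → ℝ}
    {b b' : ℝ} (hp : p ∈ simplex3) (hq₀ : q₀ ∈ simplex3) (hq₀' : q₀' ∈ simplex3) (hb : 0 < b)
    (hb' : 0 < b') (hpb : b < nb3 S q₀ p)
    (hfeas : ∀ q ∈ simplex3, nb3 S q₀ q ≤ b ↔ nb3 S q₀' q ≤ b') : q₀' ∈ line[ℝ, p, q₀] := by
  obtain ⟨a, ⟨⟨ha, hab⟩, -⟩, hmax⟩ := hBCT p hp q₀ hq₀ b hb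
  obtain ⟨a', ⟨⟨ha', hab'⟩, -⟩, hmax'⟩ := hBCT p hp q₀' hq₀' b' hb'
  have hconv := simplex3_eq_stdSimplex ▸ convex_stdSimplex ℝ (Fin 3)
  have hx := hconv hp hq₀ ha.1 (sub_nonneg.2 ha.2) (add_sub_cancel a 1)
  have hx' := hconv hp hq₀' ha'.1 (sub_nonneg.2 ha'.2) (add_sub_cancel a' 1)
  have hxx' : a • p + (1 - a) • q₀ = a' • p + (1 - a') • q₀' := by
    by_contra hne
    have := hmax _ hx' ((hfeas _ hx').2 hab') (Ne.symm hne)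
    have := hmax' _ hx ((hfeas _ hx).1 hab) hne
    linarith
  refine mem_affineSpan_pair_of_smul_add_smul_eq hxx' fun hx'p => ?_
  rw [hxx', hx'p] at hab
  linarith

theorem BCT3.false_of_argmax_eventually_tied (hS : ContinuousOn S simplex3) (hBCT : BCT3 S)
    {m : Fin 3 → ℝ} (hm : ∀ j, ∀ q ∈ simplex3, m j ≤ S q j) {p q₀ : Fin 3 → ℝ} {k : Fin 3}
    (hp : p ∈ simplex3) (hpk : S p k = m k) (hq₀ : q₀ ∈ simplex3) (hk : 0 < S q₀ k - m k)
    (htop : ∀ j, S q₀ j - m j < S q₀ k - m k ∨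
      ∀ᶠ q in 𝓝[simplex3] q₀, S q j - m j = S q k - m k) : False := by
  obtain ⟨b, ⟨hb, hbk⟩, hlow⟩ : ∃ b, b ∈ Set.Ioo 0 (S q₀ k - m k) ∧
      ∀ j, S q₀ j - m j < S q₀ k - m k → S q₀ j - m j < b := by
    refine ((eventually_mem_set.2 (Ioo_mem_nhdsLT hk)).and (eventually_all.2 fun j => ?_)).exists
    by_cases hj : S q₀ j - m j < S q₀ k - m k
    · filter_upwards [Ioo_mem_nhdsLT hj] with b hb using fun _ => hb.1
    · exact .of_forall fun _ h => absurd h hj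
  have hpb : b < nb3 S q₀ p := by
    by_contra! h
    have := nb3_le_iff.1 h k
    linarith
  have hS' : ∀ j, Tendsto (fun q => S q j) (𝓝[simplex3] q₀) (𝓝 (S q₀ j)) :=
    fun j => ((continuous_apply j).tendsto _).comp (hS q₀ hq₀)
  -- keeps the threshold `S q k - b' q` of the top coordinates at `S q₀ k - b`
  let b' (q : Fin 3 → ℝ) : ℝ := b + S q k - S q₀ k
  have hb' : Tendsto b' (𝓝[simplex3] q₀) (𝓝 b) := by
    simpa [b'] using ((hS' k).const_add b).sub_const (S q₀ k)
  have hthresholds : ∀ᶠ q in 𝓝[simplex3] q₀,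
      ∀ j, S q₀ j - b = S q j - b' q ∨ (S q₀ j - b < m j ∧ S q j - b' q < m j) := by
    refine eventually_all.2 fun j => ?_
    rcases htop j with hj | hj
    · filter_upwards [((hS' j).sub_const (m j)).eventually_lt hb' (hlow j hj)] with q hq
      exact Or.inr ⟨by linarith [hlow j hj], by linarith⟩
    · filter_upwards [hj] with q hq
      have := hj.self_of_nhdsWithin hq₀
      exact Or.inl (by simp only [b']; linarith)
  apply not_eventually_mem_affineSpan_pair hq₀ p
  filter_upwards [self_mem_nhdsWithin, hb'.eventually_const_lt hb, hthresholds]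
    with q hq hbq hq_thresholds
  exact hBCT.mem_affineSpan_pair_of_feasible_iff hp hq₀ hq hb hbq hpb
    fun q' hq' => nb3_le_iff_nb3_le hm hq_thresholds hq'

end ScoringRule

/-- Theorem `impossibility`: there is no scoring rule over three outcomes that is
strictly proper, satisfies the technical assumptions (continuity on `Δ`, differentiability on
the relative interior of `Δ`, componentwise quasiconcavity), and satisfies the
budget-constrained truthfulness property. -/
theorem stmt3 :
    ¬ ∃ S : (Fin 3 → ℝ) → Fin 3 → ℝ, StrictlyProper3 S ∧ Tech3 S ∧ BCT3 S := by
  rintro ⟨S, hSP, ⟨hS, -, -⟩, hBCT⟩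
  have hcompact : IsCompact simplex3 := isCompact_stdSimplex ℝ (Fin 3)
  choose w hw hwmin using fun j => hcompact.exists_isMinOn ⟨_, single_mem_stdSimplex ℝ 0⟩
    ((continuous_apply j).comp_continuousOn hS)
  set m := fun j => S (w j) j
  have hm : ∀ j, ∀ q ∈ simplex3, m j ≤ S q j := fun j q hq => hwmin j hq
  obtain ⟨q, hq, hqm⟩ := hSP.exists_ne m
  obtain ⟨j, hj⟩ := Function.ne_iff.1 hqm
  obtain ⟨q₀, hq₀, k, hk, htop⟩ := exists_argmax_eventually_tied
    (f := fun q j => S q j - m j) (hS.sub continuousOn_const)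
    ⟨q, hq, j, sub_pos.2 ((hm j q hq).lt_of_ne' hj)⟩
  exact hBCT.false_of_argmax_eventually_tied hS hm (hw k) rfl hq₀ hk htop
end
end

section
/- Let S : Δ → ℝ³ be a strictly proper scoring rule satisfying the technical assumptions, and let q₀ be any point in the relative interior of Δ. Then there exist a distribution r ∈ Δ and constants a > 0 and b > 0 such that S_X(r) − S_X(q₀) = −b, S_Y(r) − S_Y(q₀) = −b, and S_Z(r) − S_Z(q₀) = a. -/
open scoped BigOperators

noncomputable section

lemma seg_mem3 {P Q : Fin 3 → ℝ} (hP : P ∈ simplex3) (hQ : Q ∈ simplex3)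
    {t : ℝ} (ht : t ∈ Set.Icc (0:ℝ) 1) : (1-t) • P + t • Q ∈ simplex3 := by
  obtain ⟨hP1, hP2⟩ := hP
  obtain ⟨hQ1, hQ2⟩ := hQ
  obtain ⟨ht0, ht1⟩ := ht
  constructor
  · intro i
    have h1 := hP1 i; have h2 := hQ1 i
    simp only [Pi.add_apply, Pi.smul_apply, smul_eq_mul]
    nlinarith
  · simp only [Pi.add_apply, Pi.smul_apply, smul_eq_mul, Fin.sum_univ_three] at *
    nlinarith

lemma exists_on_seg3 (f : (Fin 3 → ℝ) → ℝ) (hf : ContinuousOn f simplex3)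
    {P Q : Fin 3 → ℝ} (hP : P ∈ simplex3) (hQ : Q ∈ simplex3)
    (h0 : f P < 0) (h1 : 0 ≤ f Q) :
    ∃ t ∈ Set.Ioc (0:ℝ) 1, f ((1-t) • P + t • Q) = 0 := by
  set g : ℝ → ℝ := fun t => f ((1-t) • P + t • Q) with hg
  have hmaps : Set.MapsTo (fun t : ℝ => (1-t) • P + t • Q) (Set.Icc 0 1) simplex3 :=
    fun t ht => seg_mem3 hP hQ ht
  have hgc : ContinuousOn g (Set.Icc (0:ℝ) 1) := by
    apply hf.comp _ hmaps
    exact Continuous.continuousOn (by continuity)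
  have hg0 : g 0 = f P := by simp [g]
  have hg1 : g 1 = f Q := by simp [g]
  have hmem : (0:ℝ) ∈ Set.Icc (g 0) (g 1) := by
    rw [hg0, hg1]; exact ⟨h0.le, h1⟩
  obtain ⟨t, htmem, htz⟩ := intermediate_value_Icc (zero_le_one) hgc hmem
  refine ⟨t, ⟨?_, htmem.2⟩, htz⟩
  rcases lt_or_eq_of_le htmem.1 with h | h
  · exact h
  · exfalso; rw [← h] at htz; rw [hg0] at htz; linarith

lemma final_step3 (S : (Fin 3 → ℝ) → Fin 3 → ℝ) (hSP : StrictlyProper3 S)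
    (q₀ : Fin 3 → ℝ) (hq₀ : q₀ ∈ relint3)
    (r : Fin 3 → ℝ) (hr : r ∈ simplex3)
    (hF : S r 0 - S r 1 = S q₀ 0 - S q₀ 1)
    (hr2 : q₀ 2 < r 2) :
    ∃ r' ∈ simplex3, ∃ a b : ℝ, 0 < a ∧ 0 < b ∧
      S r' 0 - S q₀ 0 = -b ∧ S r' 1 - S q₀ 1 = -b ∧ S r' 2 - S q₀ 2 = a := by
  obtain ⟨hqpos, hqsum⟩ := hq₀
  have hx := hqpos 0; have hy := hqpos 1; have hz := hqpos 2
  have hqsum3 : q₀ 0 + q₀ 1 + q₀ 2 = 1 := by simpa [Fin.sum_univ_three] using hqsum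
  obtain ⟨hrpos, hrsum⟩ := hr
  have hr0 := hrpos 0; have hr1 := hrpos 1
  have hrsum3 : r 0 + r 1 + r 2 = 1 := by simpa [Fin.sum_univ_three] using hrsum
  have hq₀s : q₀ ∈ simplex3 := ⟨fun i => (hqpos i).le, hqsum⟩
  have hrs : r ∈ simplex3 := ⟨hrpos, hrsum⟩
  have hne : r ≠ q₀ := by
    intro h; rw [h] at hr2; exact lt_irrefl _ hr2
  have h1 := hSP r hrs q₀ hq₀s hne
  have h2 := hSP q₀ hq₀s r hrs hne.symm
  simp only [dot3, Fin.sum_univ_three] at h1 h2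
  have e1 : r 1 * (S r 0 - S r 1) = r 1 * (S q₀ 0 - S q₀ 1) := by rw [hF]
  have e2 : (S r 0 - S q₀ 0) * (r 0 + r 1 + r 2) = (S r 0 - S q₀ 0) * 1 := by rw [hrsum3]
  have e3 : q₀ 1 * (S r 0 - S r 1) = q₀ 1 * (S q₀ 0 - S q₀ 1) := by rw [hF]
  have e4 : (S r 0 - S q₀ 0) * (q₀ 0 + q₀ 1 + q₀ 2) = (S r 0 - S q₀ 0) * 1 := by
    rw [hqsum3]
  have h1' : 0 < (1 - r 2) * (S r 0 - S q₀ 0) + r 2 * (S r 2 - S q₀ 2) := by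
    nlinarith [h1, e1, e2]
  have h2' : (1 - q₀ 2) * (S r 0 - S q₀ 0) + q₀ 2 * (S r 2 - S q₀ 2) < 0 := by
    nlinarith [h2, e3, e4]
  have hCA : S r 0 - S q₀ 0 < S r 2 - S q₀ 2 := by
    by_contra hcc
    push_neg at hcc
    have hprod : (r 2 - q₀ 2) * ((S r 2 - S q₀ 2) - (S r 0 - S q₀ 0)) ≤ 0 :=
      mul_nonpos_of_nonneg_of_nonpos (by linarith) (by linarith)
    nlinarith [h1', h2', hprod]
  have hAneg : S r 0 - S q₀ 0 < 0 := by
    by_contra hcc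
    push_neg at hcc
    have hp1 : 0 < q₀ 2 * (S r 2 - S q₀ 2) := mul_pos hz (by linarith)
    have hp2 : 0 ≤ (1 - q₀ 2) * (S r 0 - S q₀ 0) := mul_nonneg (by linarith) hcc
    linarith [h2']
  have hCpos : 0 < S r 2 - S q₀ 2 := by
    by_contra hcc
    push_neg at hcc
    have hp1 : r 2 * (S r 2 - S q₀ 2) ≤ 0 :=
      mul_nonpos_of_nonneg_of_nonpos (by linarith) hcc
    have hp2 : (1 - r 2) * (S r 0 - S q₀ 0) ≤ 0 :=
      mul_nonpos_of_nonneg_of_nonpos (by linarith) hAneg.le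
    linarith [h1']
  refine ⟨r, hrs, S r 2 - S q₀ 2, -(S r 0 - S q₀ 0), hCpos, by linarith, by ring, ?_, rfl⟩
  linarith [hF]

lemma key_mono3 (S : (Fin 3 → ℝ) → Fin 3 → ℝ) (hSP : StrictlyProper3 S)
    {p q : Fin 3 → ℝ} (hp : p ∈ simplex3) (hq : q ∈ simplex3) (hne : p ≠ q) :
    0 < (p 0 - q 0) * (S p 0 - S q 0) + (p 1 - q 1) * (S p 1 - S q 1)
        + (p 2 - q 2) * (S p 2 - S q 2) := by
  have h1 := hSP p hp q hq hne
  have h2 := hSP q hq p hp hne.symm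
  simp only [dot3, Fin.sum_univ_three] at h1 h2
  nlinarith [h1, h2]

set_option maxHeartbeats 1000000 in
/-- Lemma `xybudget`: for a strictly proper scoring rule `S` satisfying the
technical assumptions, and any point `q₀` in the relative interior of the simplex, there are a
distribution `r ∈ Δ` and constants `a, b > 0` with
`S_X(r) − S_X(q₀) = −b`, `S_Y(r) − S_Y(q₀) = −b`, and `S_Z(r) − S_Z(q₀) = a`. -/
theorem stmt4 (S : (Fin 3 → ℝ) → Fin 3 → ℝ)
    (hSP : StrictlyProper3 S) (hTech : Tech3 S)
    (q₀ : Fin 3 → ℝ) (hq₀ : q₀ ∈ relint3) :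
    ∃ r ∈ simplex3, ∃ a b : ℝ, 0 < a ∧ 0 < b ∧
      S r 0 - S q₀ 0 = -b ∧ S r 1 - S q₀ 1 = -b ∧ S r 2 - S q₀ 2 = a := by
  obtain ⟨hqpos, hqsum⟩ := hq₀
  have hx := hqpos 0; have hy := hqpos 1; have hz := hqpos 2
  have hqsum3 : q₀ 0 + q₀ 1 + q₀ 2 = 1 := by simpa [Fin.sum_univ_three] using hqsum
  have hq₀s : q₀ ∈ simplex3 := ⟨fun i => (hqpos i).le, hqsum⟩
  set eZ : Fin 3 → ℝ := ![0,0,1] with heZ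
  set PX : Fin 3 → ℝ := ![1 - q₀ 2, 0, q₀ 2] with hPXdef
  set PY : Fin 3 → ℝ := ![0, 1 - q₀ 2, q₀ 2] with hPYdef
  have heZ0 : eZ 0 = 0 := rfl
  have heZ1 : eZ 1 = 0 := rfl
  have heZ2 : eZ 2 = 1 := rfl
  have hPX0 : PX 0 = 1 - q₀ 2 := rfl
  have hPX1 : PX 1 = 0 := rfl
  have hPX2 : PX 2 = q₀ 2 := rfl
  have hPY0 : PY 0 = 0 := rfl
  have hPY1 : PY 1 = 1 - q₀ 2 := rfl
  have hPY2 : PY 2 = q₀ 2 := rfl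
  have heZs : eZ ∈ simplex3 := by
    refine ⟨fun i => ?_, by simp [heZ, Fin.sum_univ_three]⟩
    fin_cases i <;> norm_num [heZ]
  have hPXs : PX ∈ simplex3 := by
    refine ⟨fun i => ?_, by simp [hPXdef, Fin.sum_univ_three]⟩
    fin_cases i <;> simp [hPXdef] <;> linarith
  have hPYs : PY ∈ simplex3 := by
    refine ⟨fun i => ?_, by simp [hPYdef, Fin.sum_univ_three]⟩
    fin_cases i <;> simp [hPYdef] <;> linarith
  have hScont := hTech.1
  have hcomp : ∀ i : Fin 3, ContinuousOn (fun q => S q i) simplex3 :=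
    fun i => (continuous_apply i).comp_continuousOn hScont
  -- F(PY) < 0 and F(PX) > 0
  have hPYne : q₀ ≠ PY := by
    intro h; have h0 := congrFun h 0; rw [hPY0] at h0; linarith
  have hPXne : q₀ ≠ PX := by
    intro h; have h0 := congrFun h 1; rw [hPX1] at h0; linarith
  have hkeyY := key_mono3 S hSP hq₀s hPYs hPYne
  have hkeyX := key_mono3 S hSP hq₀s hPXs hPXne
  rw [hPY0, hPY1, hPY2] at hkeyY
  rw [hPX0, hPX1, hPX2] at hkeyX
  have hFPY : S PY 0 - S PY 1 < S q₀ 0 - S q₀ 1 := by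
    by_contra hcc; push_neg at hcc
    have hcoef : q₀ 1 - (1 - q₀ 2) = -(q₀ 0) := by linarith
    have hm : 0 ≤ q₀ 0 * ((S q₀ 1 - S PY 1) - (S q₀ 0 - S PY 0)) :=
      mul_nonneg hx.le (by linarith)
    rw [hcoef] at hkeyY
    nlinarith [hkeyY, hm]
  have hFPX : S q₀ 0 - S q₀ 1 < S PX 0 - S PX 1 := by
    by_contra hcc; push_neg at hcc
    have hcoef : q₀ 0 - (1 - q₀ 2) = -(q₀ 1) := by linarith
    have hm : 0 ≤ q₀ 1 * ((S q₀ 0 - S PX 0) - (S q₀ 1 - S PX 1)) :=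
      mul_nonneg hy.le (by linarith)
    rw [hcoef] at hkeyX
    nlinarith [hkeyX, hm]
  rcases le_or_gt (S q₀ 0 - S q₀ 1) (S eZ 0 - S eZ 1) with hc | hc
  · -- case F(eZ) ≥ 0 : segment PY → eZ
    have hfc : ContinuousOn (fun q => S q 0 - S q 1 - (S q₀ 0 - S q₀ 1)) simplex3 :=
      ((hcomp 0).sub (hcomp 1)).sub continuousOn_const
    obtain ⟨t, ⟨ht0, ht1⟩, hft⟩ := exists_on_seg3 _ hfc hPYs heZs
      (by show _ < (0:ℝ); linarith) (by show (0:ℝ) ≤ _; linarith)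
    set r := (1-t) • PY + t • eZ with hrdef
    have hrs : r ∈ simplex3 := seg_mem3 hPYs heZs ⟨ht0.le, ht1⟩
    have hr2 : q₀ 2 < r 2 := by
      have : r 2 = (1-t) * q₀ 2 + t * 1 := by
        simp [hrdef, hPY2, heZ2]
      rw [this]
      have hp : 0 < t * (1 - q₀ 2) := mul_pos ht0 (by linarith)
      linarith [hp]
    have hft' : S r 0 - S r 1 - (S q₀ 0 - S q₀ 1) = 0 := hft
    exact final_step3 S hSP q₀ ⟨hqpos, hqsum⟩ r hrs (by linarith) hr2
  · -- case F(eZ) < 0 : segment PX → eZ, with negated function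
    have hfc : ContinuousOn (fun q => S q 1 - S q 0 - (S q₀ 1 - S q₀ 0)) simplex3 :=
      ((hcomp 1).sub (hcomp 0)).sub continuousOn_const
    obtain ⟨t, ⟨ht0, ht1⟩, hft⟩ := exists_on_seg3 _ hfc hPXs heZs
      (by show _ < (0:ℝ); linarith) (by show (0:ℝ) ≤ _; linarith)
    set r := (1-t) • PX + t • eZ with hrdef
    have hrs : r ∈ simplex3 := seg_mem3 hPXs heZs ⟨ht0.le, ht1⟩
    have hr2 : q₀ 2 < r 2 := by
      have : r 2 = (1-t) * q₀ 2 + t * 1 := by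
        simp [hrdef, hPX2, heZ2]
      rw [this]
      have hp : 0 < t * (1 - q₀ 2) := mul_pos ht0 (by linarith)
      linarith [hp]
    have hft' : S r 1 - S r 0 - (S q₀ 1 - S q₀ 0) = 0 := hft
    exact final_step3 S hSP q₀ ⟨hqpos, hqsum⟩ r hrs (by linarith) hr2
end
end

section
/- Myopic strategyproofness of the Scaled Scoring Mechanism: let S : Δ → ℝᵏ be a strictly proper scoring rule and B > 0. Then for every belief p ∈ Δ, reference point q̄ ∈ Δ, true budget b ≥ 0, every report q ∈ Δ, and every reported budget b' with 0 ≤ b' ≤ b, the expected payoff of truthfully reporting (p, b) is at least that of reporting (q, b'): min(1, b/B) · (p·S(p) − p·S(q̄)) ≥ min(1, b'/B) · (p·S(q) − p·S(q̄)). -/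
open scoped BigOperators

noncomputable section

/-- The probability simplex over `k` outcomes. -/
def simplexK (k : ℕ) : Set (Fin k → ℝ) := {q | (∀ i, 0 ≤ q i) ∧ ∑ i, q i = 1}

/-- Dot product of two vectors in `ℝᵏ`. -/
def dotK {k : ℕ} (p s : Fin k → ℝ) : ℝ := ∑ i, p i * s i

/-- A scoring rule `S : Δ → ℝᵏ` is strictly proper if for all `p ≠ q` in the simplex,
`p·S(p) > p·S(q)`. -/
def StrictlyProperK {k : ℕ} (S : (Fin k → ℝ) → Fin k → ℝ) : Prop :=
  ∀ p ∈ simplexK k, ∀ q ∈ simplexK k, p ≠ q → dotK p (S q) < dotK p (S p)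

theorem StrictlyProperK.dotK_le {k : ℕ} {S : (Fin k → ℝ) → Fin k → ℝ}
    (hS : StrictlyProperK S) {p q : Fin k → ℝ} (hp : p ∈ simplexK k) (hq : q ∈ simplexK k) :
    dotK p (S q) ≤ dotK p (S p) := by
  rcases eq_or_ne p q with rfl | hpq
  · exact le_rfl
  · exact (hS p hp q hq hpq).le

theorem stmt11_general (k : ℕ)
    (S : (Fin k → ℝ) → Fin k → ℝ) (hSP : StrictlyProperK S)
    (B : ℝ) (hB : 0 < B)
    (p qbar q : Fin k → ℝ)
    (hp : p ∈ simplexK k) (hqbar : qbar ∈ simplexK k) (hq : q ∈ simplexK k)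
    (b b' : ℝ) (hb' : 0 ≤ b') (hb'b : b' ≤ b) :
    min 1 (b' / B) * (dotK p (S q) - dotK p (S qbar)) ≤
      min 1 (b / B) * (dotK p (S p) - dotK p (S qbar)) := by
  have hq_le := hSP.dotK_le hp hq
  have hqbar_le := hSP.dotK_le hp hqbar
  calc min 1 (b' / B) * (dotK p (S q) - dotK p (S qbar))
      ≤ min 1 (b' / B) * (dotK p (S p) - dotK p (S qbar)) := by gcongr
    -- truthful gain is nonnegative, since `qbar` itself is a possible report
    _ ≤ min 1 (b / B) * (dotK p (S p) - dotK p (S qbar)) := by gcongr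

/-- myopic strategyproofness of the Scaled Scoring Mechanism: for a strictly
proper scoring rule `S` and parameter `B > 0`, for every belief `p ∈ Δ`, reference point
`q̄ ∈ Δ`, true budget `b ≥ 0`, report `q ∈ Δ` and reported budget `b'` with `0 ≤ b' ≤ b`, the
expected payoff of truthfully reporting `(p, b)` is at least that of reporting `(q, b')`:
`min(1, b/B)·(p·S(p) − p·S(q̄)) ≥ min(1, b'/B)·(p·S(q) − p·S(q̄))`. -/
theorem stmt11 (k : ℕ) (hk : 2 ≤ k)
    (S : (Fin k → ℝ) → Fin k → ℝ) (hSP : StrictlyProperK S)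
    (B : ℝ) (hB : 0 < B)
    (p qbar q : Fin k → ℝ)
    (hp : p ∈ simplexK k) (hqbar : qbar ∈ simplexK k) (hq : q ∈ simplexK k)
    (b b' : ℝ) (hb : 0 ≤ b) (hb' : 0 ≤ b') (hb'b : b' ≤ b) :
    min 1 (b' / B) * (dotK p (S q) - dotK p (S qbar)) ≤
      min 1 (b / B) * (dotK p (S p) - dotK p (S qbar)) :=
  stmt11_general k S hSP B hB p qbar q hp hqbar hq b b' hb' hb'b
end
end

section
/- No-default property of the Scaled Scoring Mechanism: let S : Δ → ℝᵏ be a scoring rule and B > 0 a constant such that the natural budget nb(q₀, q) := max_i (S_i(q₀) − S_i(q)) satisfies nb(q₀, q) ≤ B for all q₀, q ∈ Δ. Then for every reference point q̄ ∈ Δ, report q ∈ Δ, reported budget b' ≥ 0, and outcome i, the agent's net payoff satisfies min(1, b'/B) · (S_i(q) − S_i(q̄)) ≥ −b'. -/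
open scoped BigOperators

noncomputable section

/-- The natural budget required to move from `q₀` to `q`: `max_i (S_i(q₀) − S_i(q))`. -/
def nbK {k : ℕ} [NeZero k] (S : (Fin k → ℝ) → Fin k → ℝ) (q₀ q : Fin k → ℝ) : ℝ :=
  Finset.univ.sup' (Finset.univ_nonempty) (fun i => S q₀ i - S q i)

/-- no default for the Scaled Scoring Mechanism: if `S` is a scoring rule and
`B > 0` a constant with `nb(q₀, q) ≤ B` for all `q₀, q ∈ Δ`, then for every reference point
`q̄ ∈ Δ`, report `q ∈ Δ`, reported budget `b' ≥ 0` and outcome `i`, the net payoff satisfies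
`min(1, b'/B)·(S_i(q) − S_i(q̄)) ≥ −b'`. -/
theorem stmt12 (k : ℕ) (hk : 2 ≤ k) [NeZero k]
    (S : (Fin k → ℝ) → Fin k → ℝ)
    (B : ℝ) (hB : 0 < B)
    (hbound : ∀ q₀ ∈ simplexK k, ∀ q ∈ simplexK k, nbK S q₀ q ≤ B)
    (qbar q : Fin k → ℝ) (hqbar : qbar ∈ simplexK k) (hq : q ∈ simplexK k)
    (b' : ℝ) (hb' : 0 ≤ b') (i : Fin k) :
    -b' ≤ min 1 (b' / B) * (S q i - S qbar i) := by
  have h1 : S qbar i - S q i ≤ B := by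
    refine le_trans ?_ (hbound qbar hqbar q hq)
    exact Finset.le_sup' (fun j => S qbar j - S q j) (Finset.mem_univ i)
  have h2 : -B ≤ S q i - S qbar i := by linarith
  have hm0 : 0 ≤ min 1 (b' / B) := le_min one_pos.le (div_nonneg hb' hB.le)
  rcases le_or_gt 0 (S q i - S qbar i) with h | h
  · nlinarith
  · have hmle : min 1 (b' / B) ≤ b' / B := min_le_right _ _
    have : b' / B * (S q i - S qbar i) ≤ min 1 (b' / B) * (S q i - S qbar i) :=
      mul_le_mul_of_nonpos_right hmle h.le
    have hd : b' / B * B = b' := div_mul_cancel₀ b' hB.ne'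
    nlinarith [div_nonneg hb' hB.le]
end
end

section
/- Limited loss of the Scaled Scoring Mechanism: let S : Δ → ℝᵏ be a scoring rule each of whose components S_i is concave on Δ. Fix an initial reference point q̄₀ ∈ Δ, reports q₁, …, q_m ∈ Δ, and scaling factors λ₁, …, λ_m ∈ [0,1], and define the reference points recursively by q̄_j = q̄_{j−1} + λ_j (q_j − q̄_{j−1}). Then for every outcome i, the total payment of the mechanism satisfies Σ_{j=1}^m λ_j (S_i(q_j) − S_i(q̄_{j−1})) ≤ S_i(q̄_m) − S_i(q̄₀); that is, the total SSM payout under any outcome is at most the payout of a market scoring rule whose forecast moves from q̄₀ to q̄_m. -/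
/-!
Concavity of `S_i` gives, for the step `q̄_j = (1 - λ_j) q̄_{j-1} + λ_j q_j`, the bound
`λ_j (S_i(q_j) - S_i(q̄_{j-1})) ≤ S_i(q̄_j) - S_i(q̄_{j-1})`; summing over `j`, the right-hand
sides telescope to `S_i(q̄_m) - S_i(q̄_0)`.
-/

open scoped BigOperators

noncomputable section

open Set

theorem Fin.sum_succ_sub_castSucc {G : Type*} [AddCommGroup G] {m : ℕ} (a : Fin (m + 1) → G) :
    ∑ j : Fin m, (a j.succ - a j.castSucc) = a (Fin.last m) - a 0 := by
  induction m with
  | zero => simp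
  | succ m ih =>
    rw [Fin.sum_univ_castSucc]
    simp only [Fin.succ_castSucc]
    rw [ih fun j => a j.castSucc, Fin.succ_last, Fin.castSucc_zero]
    abel

section

variable {E : Type*} [AddCommGroup E] [Module ℝ E] {s : Set E} {f : E → ℝ}

theorem ConcaveOn.mul_sub_le_add_smul_sub (hf : ConcaveOn ℝ s f) {x y : E} (hx : x ∈ s)
    (hy : y ∈ s) {t : ℝ} (ht : t ∈ Icc (0 : ℝ) 1) :
    t * (f y - f x) ≤ f (x + t • (y - x)) - f x := by
  have hxy : x + t • (y - x) = (1 - t) • x + t • y := by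
    rw [smul_sub, sub_smul, one_smul]; abel
  have := hf.2 hx hy (sub_nonneg.2 ht.2) ht.1 (sub_add_cancel 1 t)
  rw [hxy]
  simp only [smul_eq_mul] at this
  linarith

theorem Convex.mem_of_add_smul_sub_rec (hs : Convex ℝ s) {m : ℕ} {q : Fin m → E}
    (hq : ∀ j, q j ∈ s) {l : Fin m → ℝ} (hl : ∀ j, l j ∈ Icc (0 : ℝ) 1)
    {x : Fin (m + 1) → E} (hx0 : x 0 ∈ s)
    (hrec : ∀ j : Fin m, x j.succ = x j.castSucc + l j • (q j - x j.castSucc)) (j : Fin (m + 1)) :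
    x j ∈ s := by
  induction j using Fin.induction with
  | zero => exact hx0
  | succ j ih => rw [hrec j]; exact hs.add_smul_sub_mem ih (hq j) (hl j)

theorem ConcaveOn.sum_mul_sub_le_sub_of_rec (hf : ConcaveOn ℝ s f) {m : ℕ} {q : Fin m → E}
    (hq : ∀ j, q j ∈ s) {l : Fin m → ℝ} (hl : ∀ j, l j ∈ Icc (0 : ℝ) 1)
    {x : Fin (m + 1) → E} (hx0 : x 0 ∈ s)
    (hrec : ∀ j : Fin m, x j.succ = x j.castSucc + l j • (q j - x j.castSucc)) :
    ∑ j : Fin m, l j * (f (q j) - f (x j.castSucc)) ≤ f (x (Fin.last m)) - f (x 0) := by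
  have hx := hf.1.mem_of_add_smul_sub_rec hq hl hx0 hrec
  rw [← Fin.sum_succ_sub_castSucc fun j => f (x j)]
  refine Finset.sum_le_sum fun j _ => ?_
  simpa only [hrec j] using hf.mul_sub_le_add_smul_sub (hx _) (hq j) (hl j)

end

theorem stmt13_general (k : ℕ)
    (S : (Fin k → ℝ) → Fin k → ℝ)
    (hconc : ∀ i : Fin k, ConcaveOn ℝ (simplexK k) (fun q => S q i))
    (m : ℕ) (q : Fin m → Fin k → ℝ) (hq : ∀ j, q j ∈ simplexK k)
    (l : Fin m → ℝ) (hl : ∀ j, l j ∈ Set.Icc (0:ℝ) 1)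
    (qbar : Fin (m + 1) → Fin k → ℝ) (hqbar0 : qbar 0 ∈ simplexK k)
    (hrec : ∀ j : Fin m, qbar j.succ = qbar j.castSucc + l j • (q j - qbar j.castSucc))
    (i : Fin k) :
    ∑ j : Fin m, l j * (S (q j) i - S (qbar j.castSucc) i) ≤
      S (qbar (Fin.last m)) i - S (qbar 0) i :=
  (hconc i).sum_mul_sub_le_sub_of_rec hq hl hqbar0 hrec

/-- limited loss of the Scaled Scoring Mechanism: let `S` be a scoring rule
whose components are concave on the simplex. Fix an initial reference point `q̄₀ = qbar 0 ∈ Δ`,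
reports `q₁, …, q_m ∈ Δ` and scaling factors `λ₁, …, λ_m ∈ [0,1]`, and let the reference
points evolve by `q̄_j = q̄_{j−1} + λ_j (q_j − q̄_{j−1})`. Then under every outcome `i`, the
total SSM payout `Σ_j λ_j (S_i(q_j) − S_i(q̄_{j−1}))` is at most
`S_i(q̄_m) − S_i(q̄₀)`, the payout of a market scoring rule moving from `q̄₀` to `q̄_m`. -/
theorem stmt13 (k : ℕ) (hk : 2 ≤ k)
    (S : (Fin k → ℝ) → Fin k → ℝ)
    (hconc : ∀ i : Fin k, ConcaveOn ℝ (simplexK k) (fun q => S q i))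
    (m : ℕ) (q : Fin m → Fin k → ℝ) (hq : ∀ j, q j ∈ simplexK k)
    (l : Fin m → ℝ) (hl : ∀ j, l j ∈ Set.Icc (0:ℝ) 1)
    (qbar : Fin (m + 1) → Fin k → ℝ) (hqbar0 : qbar 0 ∈ simplexK k)
    (hrec : ∀ j : Fin m, qbar j.succ = qbar j.castSucc + l j • (q j - qbar j.castSucc))
    (i : Fin k) :
    ∑ j : Fin m, l j * (S (q j) i - S (qbar j.castSucc) i) ≤
      S (qbar (Fin.last m)) i - S (qbar 0) i :=
  stmt13_general k S hconc m q hq l hl qbar hqbar0 hrec i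
end
end

section
/- Myopic sybilproofness of the Scaled Scoring Mechanism (two-trade case): let S : Δ → ℝᵏ be a scoring rule each of whose components S_i is concave on Δ. Fix a belief p ∈ Δ, an initial reference point q̄₀ ∈ Δ, reports q₁, q₂ ∈ Δ, and scaling factors λ₁, λ₂ ≥ 0 with λ₁ + λ₂ ≤ 1, and set q̄₁ = q̄₀ + λ₁(q₁ − q̄₀). Then the total expected payoff of the two consecutive trades is at most the expected payoff of a single trade with the combined scaling factor reporting the better of the two forecasts: λ₁ · (p·S(q₁) − p·S(q̄₀)) + λ₂ · (p·S(q₂) − p·S(q̄₁)) ≤ (λ₁ + λ₂) · max{ p·S(q₁) − p·S(q̄₀), p·S(q₂) − p·S(q̄₀), 0 }. -/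
/-! With `p ≥ 0`, concavity of every `S_i` makes the expected score `V(q) = p·S(q)` concave, so
`V(q̄₁) ≥ V(q̄₀) + λ₁ (V(q₁) − V(q̄₀))`. Writing `a`, `b` for the gains of `q₁`, `q₂` over `q̄₀`, the
second trade therefore earns at most `b − λ₁ a`, and the total is at most `λ₁ (1 − λ₂) a + λ₂ b`:
a nonnegative combination of `a` and `b` with weights summing to at most `λ₁ + λ₂`. -/

open scoped BigOperators

noncomputable section

theorem simplexK_eq_stdSimplex (k : ℕ) : simplexK k = stdSimplex ℝ (Fin k) := rfl

theorem convex_simplexK (k : ℕ) : Convex ℝ (simplexK k) :=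
  simplexK_eq_stdSimplex k ▸ convex_stdSimplex ℝ (Fin k)

theorem mul_add_mul_le_add_mul_max {a b c l₁ l₂ : ℝ} (hl₁ : 0 ≤ l₁) (hl₂ : 0 ≤ l₂)
    (hsum : l₁ + l₂ ≤ 1) (hc : c ≤ b - l₁ * a) :
    l₁ * a + l₂ * c ≤ (l₁ + l₂) * max (max a b) 0 := by
  set M := max (max a b) 0
  have haM : a ≤ M := (le_max_left a b).trans (le_max_left _ _)
  have hbM : b ≤ M := (le_max_right a b).trans (le_max_left _ _)
  have hM : 0 ≤ M := le_max_right _ _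
  calc l₁ * a + l₂ * c ≤ l₁ * (1 - l₂) * a + l₂ * b := by
        linarith [mul_le_mul_of_nonneg_left hc hl₂]
    _ ≤ l₁ * (1 - l₂) * M + l₂ * M + l₁ * l₂ * M := by
      have hw : 0 ≤ l₁ * (1 - l₂) := mul_nonneg hl₁ (by linarith)
      linarith [mul_le_mul_of_nonneg_left haM hw, mul_le_mul_of_nonneg_left hbM hl₂,
        mul_nonneg (mul_nonneg hl₁ hl₂) hM]
    _ = (l₁ + l₂) * M := by ring

section Concave

variable {E ι : Type*} [AddCommGroup E] [Module ℝ E] {s : Set E}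

theorem ConcaveOn.finset_sum {t : Finset ι} {f : ι → E → ℝ} (hs : Convex ℝ s)
    (hf : ∀ i ∈ t, ConcaveOn ℝ s (f i)) : ConcaveOn ℝ s (fun x => ∑ i ∈ t, f i x) := by
  classical
  induction t using Finset.induction_on with
  | empty => simpa using concaveOn_const (0 : ℝ) hs
  | insert i t hi ih =>
    simp_rw [Finset.sum_insert hi]
    exact (hf i (t.mem_insert_self i)).add (ih fun j hj => hf j (Finset.mem_insert_of_mem hj))

theorem ConcaveOn.dotK {k : ℕ} {S : E → Fin k → ℝ} {p : Fin k → ℝ} (hs : Convex ℝ s)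
    (hp : ∀ i, 0 ≤ p i) (hS : ∀ i, ConcaveOn ℝ s (fun q => S q i)) :
    ConcaveOn ℝ s (fun q => dotK p (S q)) :=
  ConcaveOn.finset_sum hs fun i _ => (hS i).smul (hp i)

theorem ConcaveOn.add_mul_sub_le {f : E → ℝ} (hf : ConcaveOn ℝ s f) {x y : E} (hx : x ∈ s)
    (hy : y ∈ s) {t : ℝ} (ht₀ : 0 ≤ t) (ht₁ : t ≤ 1) :
    f x + t * (f y - f x) ≤ f (x + t • (y - x)) := by
  have hpoint : x + t • (y - x) = (1 - t) • x + t • y := by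
    rw [smul_sub, sub_smul, one_smul]; abel
  have h := hf.2 hx hy (sub_nonneg.2 ht₁) ht₀ (sub_add_cancel 1 t)
  rw [smul_eq_mul, smul_eq_mul] at h
  rw [hpoint]
  linarith

theorem ConcaveOn.two_trade_payoff_le {f : E → ℝ} (hf : ConcaveOn ℝ s f) {x₀ x₁ : E}
    (hx₀ : x₀ ∈ s) (hx₁ : x₁ ∈ s) (x₂ : E) {l₁ l₂ : ℝ} (hl₁ : 0 ≤ l₁) (hl₂ : 0 ≤ l₂) (hsum : l₁ + l₂ ≤ 1) :
    l₁ * (f x₁ - f x₀) + l₂ * (f x₂ - f (x₀ + l₁ • (x₁ - x₀))) ≤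
      (l₁ + l₂) * max (max (f x₁ - f x₀) (f x₂ - f x₀)) 0 := by
  refine mul_add_mul_le_add_mul_max hl₁ hl₂ hsum ?_
  have := hf.add_mul_sub_le hx₀ hx₁ hl₁ (by linarith)
  linarith

end Concave

theorem stmt14_general (k : ℕ)
    (S : (Fin k → ℝ) → Fin k → ℝ)
    (hconc : ∀ i : Fin k, ConcaveOn ℝ (simplexK k) (fun q => S q i))
    (p qbar₀ q₁ q₂ : Fin k → ℝ)
    (hp : p ∈ simplexK k) (hqbar₀ : qbar₀ ∈ simplexK k)
    (hq₁ : q₁ ∈ simplexK k)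
    (l1 l2 : ℝ) (hl1 : 0 ≤ l1) (hl2 : 0 ≤ l2) (hsum : l1 + l2 ≤ 1)
    (qbar₁ : Fin k → ℝ) (hqbar₁ : qbar₁ = qbar₀ + l1 • (q₁ - qbar₀)) :
    l1 * (dotK p (S q₁) - dotK p (S qbar₀)) + l2 * (dotK p (S q₂) - dotK p (S qbar₁)) ≤
      (l1 + l2) * max (max (dotK p (S q₁) - dotK p (S qbar₀))
        (dotK p (S q₂) - dotK p (S qbar₀))) 0 := by
  have hpayoff : ConcaveOn ℝ (simplexK k) (fun q => dotK p (S q)) :=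
    ConcaveOn.dotK (convex_simplexK k) hp.1 hconc
  subst hqbar₁
  exact hpayoff.two_trade_payoff_le hqbar₀ hq₁ q₂ hl1 hl2 hsum

/-- myopic sybilproofness of the Scaled Scoring Mechanism, two-trade case: let
`S` be a scoring rule whose components are concave on the simplex, `p ∈ Δ` a belief,
`q̄₀ ∈ Δ` an initial reference point, `q₁, q₂ ∈ Δ` reports, and `λ₁, λ₂ ≥ 0` scaling factors
with `λ₁ + λ₂ ≤ 1`; set `q̄₁ = q̄₀ + λ₁(q₁ − q̄₀)`. Then the total expected payoff of the two
consecutive trades is at most the expected payoff of a single trade with the combined scaling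
factor reporting the better of the two forecasts:
`λ₁(p·S(q₁) − p·S(q̄₀)) + λ₂(p·S(q₂) − p·S(q̄₁))
  ≤ (λ₁ + λ₂)·max{p·S(q₁) − p·S(q̄₀), p·S(q₂) − p·S(q̄₀), 0}`. -/
theorem stmt14 (k : ℕ) (hk : 2 ≤ k)
    (S : (Fin k → ℝ) → Fin k → ℝ)
    (hconc : ∀ i : Fin k, ConcaveOn ℝ (simplexK k) (fun q => S q i))
    (p qbar₀ q₁ q₂ : Fin k → ℝ)
    (hp : p ∈ simplexK k) (hqbar₀ : qbar₀ ∈ simplexK k)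
    (hq₁ : q₁ ∈ simplexK k) (hq₂ : q₂ ∈ simplexK k)
    (l1 l2 : ℝ) (hl1 : 0 ≤ l1) (hl2 : 0 ≤ l2) (hsum : l1 + l2 ≤ 1)
    (qbar₁ : Fin k → ℝ) (hqbar₁ : qbar₁ = qbar₀ + l1 • (q₁ - qbar₀)) :
    l1 * (dotK p (S q₁) - dotK p (S qbar₀)) + l2 * (dotK p (S q₂) - dotK p (S qbar₁)) ≤
      (l1 + l2) * max (max (dotK p (S q₁) - dotK p (S qbar₀))
        (dotK p (S q₂) - dotK p (S qbar₀))) 0 :=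
  stmt14_general k S hconc p qbar₀ q₁ q₂ hp hqbar₀ hq₁ l1 l2 hl1 hl2 hsum qbar₁ hqbar₁
end
end
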